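/- arXiv:2505.23247 — 4 statements merged into one kernel-verified Lean document; each statement's English description precedes it below -/
import Mathlib

section
/- Let p₁,...,pₙ > 0, m < M, c ∈ ℝ, and P = {z ∈ ℝⁿ : Σᵢ pᵢ zᵢ = c, m ≤ zᵢ ≤ M, z₁ ≥ ... ≥ zₙ}. Then z ∈ P is an extreme point of P if and only if there exist indices 0 ≤ k ≤ l ≤ n and a value α with m ≤ α ≤ M such that z₁ = ... = z_k = M, z_{k+1} = ... = z_l = α, z_{l+1} = ... = zₙ = m, where if k < l then α = (c − M·Σ_{i≤k} pᵢ − m·Σ_{i>l} pᵢ)/(Σ_{k<i≤l} pᵢ), and additionally if k+1 < l then m < α < M (i.e., the middle block takes a single value strictly between m and M when it has more than one coordinate). -/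
lemma mem_iff_lt_card {n : ℕ} (S : Finset (Fin n))
    (hS : ∀ i j : Fin n, i ≤ j → j ∈ S → i ∈ S) (i : Fin n) :
    i ∈ S ↔ i.val < S.card := by
  constructor
  · intro hi
    have h1 : Finset.Iic i ⊆ S := fun j hj => hS j i (Finset.mem_Iic.mp hj) hi
    have h2 := Finset.card_le_card h1
    rw [Fin.card_Iic] at h2
    omega
  · intro hi
    by_contra hni
    have h1 : S ⊆ Finset.Iio i := by
      intro j hj
      rw [Finset.mem_Iio]
      by_contra hji
      exact hni (hS i j (le_of_not_gt hji) hj)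
    have h2 := Finset.card_le_card h1
    rw [Fin.card_Iio] at h2
    omega

lemma sum_split {n : ℕ} (p z : Fin n → ℝ) (k l : ℕ) (M α m : ℝ) (hkl : k ≤ l)
    (hM : ∀ i : Fin n, i.val < k → z i = M)
    (hα : ∀ i : Fin n, k ≤ i.val → i.val < l → z i = α)
    (hm : ∀ i : Fin n, l ≤ i.val → z i = m) :
    ∑ i, p i * z i
      = M * ∑ i ∈ Finset.univ.filter (fun i : Fin n => i.val < k), p i
      + α * ∑ i ∈ Finset.univ.filter (fun i : Fin n => k ≤ i.val ∧ i.val < l), p i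
      + m * ∑ i ∈ Finset.univ.filter (fun i : Fin n => l ≤ i.val), p i := by
  have key : ∀ (S : Finset (Fin n)) (v : ℝ), (∀ i ∈ S, z i = v) →
      ∑ i ∈ S, p i * z i = v * ∑ i ∈ S, p i := by
    intro S v hv
    rw [Finset.mul_sum]
    exact Finset.sum_congr rfl fun i hi => by rw [hv i hi, mul_comm]
  rw [← Finset.sum_filter_add_sum_filter_not Finset.univ (fun i : Fin n => i.val < k)
        (fun i => p i * z i),
      ← Finset.sum_filter_add_sum_filter_not (Finset.univ.filter (fun i : Fin n => ¬ i.val < k))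
        (fun i : Fin n => i.val < l) (fun i => p i * z i),
      Finset.filter_filter, Finset.filter_filter]
  have e1 : Finset.univ.filter (fun i : Fin n => ¬ i.val < k ∧ i.val < l)
      = Finset.univ.filter (fun i : Fin n => k ≤ i.val ∧ i.val < l) := by
    apply Finset.filter_congr; intro i _; constructor <;> (intro h; omega)
  have e2 : Finset.univ.filter (fun i : Fin n => ¬ i.val < k ∧ ¬ i.val < l)
      = Finset.univ.filter (fun i : Fin n => l ≤ i.val) := by
    apply Finset.filter_congr; intro i _; constructor <;> (intro h; omega)
  rw [e1, e2,
      key _ M (fun i hi => hM i (Finset.mem_filter.mp hi).2),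
      key _ α (fun i hi => hα i (Finset.mem_filter.mp hi).2.1 (Finset.mem_filter.mp hi).2.2),
      key _ m (fun i hi => hm i (Finset.mem_filter.mp hi).2), add_assoc]


lemma not_extreme {n : ℕ} (p : Fin n → ℝ) (hp : ∀ i, 0 < p i) (m M c : ℝ)
    (z : Fin n → ℝ)
    (hzc : ∑ i, p i * z i = c) (hzb : ∀ i, m ≤ z i ∧ z i ≤ M)
    (hzm : ∀ i j : Fin n, i ≤ j → z j ≤ z i)
    (hext : z ∈ Set.extremePoints ℝ {w : Fin n → ℝ | (∑ i, p i * w i = c) ∧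
      (∀ i, m ≤ w i ∧ w i ≤ M) ∧ (∀ i j : Fin n, i ≤ j → w j ≤ w i)})
    (i j : Fin n) (hmj : m < z j) (hiM : z i < M) (hij : z j < z i) : False := by
  classical
  set A := Finset.univ.filter (fun t : Fin n => z t = z i) with hA
  set B := Finset.univ.filter (fun t : Fin n => z t = z j) with hB
  have hiA : i ∈ A := by simp [hA]
  have hjB : j ∈ B := by simp [hB]
  have hPA : 0 < ∑ t ∈ A, p t := Finset.sum_pos (fun t _ => hp t) ⟨i, hiA⟩
  have hPB : 0 < ∑ t ∈ B, p t := Finset.sum_pos (fun t _ => hp t) ⟨j, hjB⟩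
  set a := (∑ t ∈ A, p t)⁻¹ with ha'
  set b := (∑ t ∈ B, p t)⁻¹ with hb'
  have ha : 0 < a := inv_pos.mpr hPA
  have hb : 0 < b := inv_pos.mpr hPB
  have haPA : (∑ t ∈ A, p t) * a = 1 := mul_inv_cancel₀ hPA.ne'
  have hbPB : (∑ t ∈ B, p t) * b = 1 := mul_inv_cancel₀ hPB.ne'
  set f : ℝ → ℝ := fun v => (if v = z i then a else 0) + (if v = z j then -b else 0) with hf
  set d : Fin n → ℝ := fun t => f (z t) with hd
  have hne : z i ≠ z j := ne_of_gt hij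
  have hdi : d i = a := by simp [hd, hf, hne]
  have hdj : d j = -b := by simp [hd, hf, hne.symm, hne]
  have hdval : ∀ t, (z t = z i → d t = a) ∧ (z t = z j → d t = -b) ∧
      (z t ≠ z i → z t ≠ z j → d t = 0) := by
    intro t
    refine ⟨fun h => ?_, fun h => ?_, fun h1 h2 => ?_⟩
    · simp [hd, hf, h, hne]
    · simp [hd, hf, h, hne.symm]
    · simp [hd, hf, h1, h2]
  have hdcong : ∀ s t : Fin n, z s = z t → d s = d t := by
    intro s t h
    simp only [hd]
    rw [h]
  -- sum p d = 0
  have hsum : ∑ t, p t * d t = 0 := by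
    have e : ∀ t, p t * d t = (if z t = z i then p t * a else 0)
        + (if z t = z j then p t * (-b) else 0) := by
      intro t
      simp only [hd, hf, mul_add, mul_ite, mul_zero]
    rw [Finset.sum_congr rfl (fun t _ => e t), Finset.sum_add_distrib,
        ← Finset.sum_filter, ← Finset.sum_filter, ← hA, ← hB]
    have e1 : ∑ t ∈ A, p t * a = 1 := by rw [← Finset.sum_mul]; exact haPA
    have e2 : ∑ t ∈ B, p t * (-b) = -1 := by
      have h3 : ∑ t ∈ B, p t * (-b) = -((∑ t ∈ B, p t) * b) := by
        rw [← Finset.sum_mul]; ring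
      rw [h3, hbPB]
    rw [e1, e2]; ring
  -- gap
  obtain ⟨g, hg_pos, hg_le⟩ : ∃ g : ℝ, 0 < g ∧ ∀ s t : Fin n, z t < z s → g ≤ z s - z t := by
    have hGne : (((Finset.univ ×ˢ Finset.univ).filter
        (fun st : Fin n × Fin n => z st.2 < z st.1)).image
        (fun st : Fin n × Fin n => z st.1 - z st.2)).Nonempty :=
      ⟨z i - z j, Finset.mem_image.mpr ⟨(i, j), Finset.mem_filter.mpr ⟨Finset.mem_product.mpr ⟨Finset.mem_univ _, Finset.mem_univ _⟩, hij⟩, rfl⟩⟩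
    refine ⟨Finset.min' _ hGne, ?_, ?_⟩
    · obtain ⟨st, hst, hval⟩ := Finset.mem_image.mp (Finset.min'_mem _ hGne)
      simp only [Finset.mem_filter] at hst
      exact lt_of_lt_of_eq (sub_pos.mpr hst.2) hval
    · intro s t h
      exact Finset.min'_le _ _ (Finset.mem_image.mpr ⟨(s, t), Finset.mem_filter.mpr ⟨Finset.mem_product.mpr ⟨Finset.mem_univ _, Finset.mem_univ _⟩, h⟩, rfl⟩)
  -- epsilon
  set E := min (min (M - z i) (z j - m)) g with hE
  have hE_pos : 0 < E := by
    rw [hE]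
    simp only [lt_min_iff]
    exact ⟨⟨by linarith, by linarith⟩, hg_pos⟩
  have hEg : E ≤ g := min_le_right _ _
  have hE1 : E ≤ M - z i := le_trans (min_le_left _ _) (min_le_left _ _)
  have hE2 : E ≤ z j - m := le_trans (min_le_left _ _) (min_le_right _ _)
  have hab : 0 < a + b := by linarith
  set ε := E / (2 * (a + b)) with hε'
  have hε : 0 < ε := div_pos hE_pos (by linarith)
  have hεE : ε * (2 * (a + b)) = E := div_mul_cancel₀ E (by linarith : (0:ℝ) < 2*(a+b)).ne'
  have hεa : ε * a ≤ E := by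
    have h1 : a ≤ 2 * (a + b) := by linarith
    have h2 := mul_le_mul_of_nonneg_left h1 hε.le
    linarith
  have hεb : ε * b ≤ E := by
    have h1 : b ≤ 2 * (a + b) := by linarith
    have h2 := mul_le_mul_of_nonneg_left h1 hε.le
    linarith
  -- bounds on d
  have hdb : ∀ t, -(a + b) ≤ d t ∧ d t ≤ a + b := by
    intro t
    simp only [hd, hf]
    split_ifs <;> constructor <;> linarith
  clear_value ε E d f b a B A
  -- the perturbed points lie in the feasible set
  have hmem : ∀ e : ℝ, -ε ≤ e → e ≤ ε →
      (fun t => z t + e * d t) ∈ {w : Fin n → ℝ | (∑ i, p i * w i = c) ∧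
        (∀ i, m ≤ w i ∧ w i ≤ M) ∧ (∀ i j : Fin n, i ≤ j → w j ≤ w i)} := by
    intro e he1 he2
    have hea1 : e * a ≤ ε * a := mul_le_mul_of_nonneg_right he2 ha.le
    have hea2 : -ε * a ≤ e * a := mul_le_mul_of_nonneg_right he1 ha.le
    have heb1 : e * b ≤ ε * b := mul_le_mul_of_nonneg_right he2 hb.le
    have heb2 : -ε * b ≤ e * b := mul_le_mul_of_nonneg_right he1 hb.le
    refine ⟨?_, ?_, ?_⟩
    · have h1 : ∀ t, p t * (z t + e * d t) = p t * z t + e * (p t * d t) := by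
        intro t; ring
      rw [Finset.sum_congr rfl (fun t _ => h1 t), Finset.sum_add_distrib,
          ← Finset.mul_sum, hsum, hzc]
      ring
    · intro t
      show m ≤ z t + e * d t ∧ z t + e * d t ≤ M
      by_cases h1 : z t = z i
      · have hdt : d t = a := (hdval t).1 h1
        rw [hdt, h1]
        constructor
        · have : ε * a ≤ z i - m := by linarith
          linarith
        · linarith
      · by_cases h2 : z t = z j
        · have hdt : d t = -b := (hdval t).2.1 h2
          rw [hdt, h2]
          have hMj : ε * b ≤ M - z j := by
            have := hg_le i j hij
            linarith
          constructor
          · have : ε * b ≤ z j - m := le_trans hεb hE2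
            nlinarith [heb1, heb2]
          · nlinarith [heb1, heb2]
        · have hdt : d t = 0 := (hdval t).2.2 h1 h2
          rw [hdt]
          simpa using hzb t
    · intro s t hst
      show z t + e * d t ≤ z s + e * d s
      have hzst := hzm s t hst
      rcases eq_or_lt_of_le hzst with heq | hlt
      · rw [hdcong s t heq.symm, heq]
      · have hgl := hg_le s t hlt
        have h5 := hdb s
        have h6 := hdb t
        have P1 : 0 ≤ (ε - e) * (2 * (a + b) - (d s - d t)) :=
          mul_nonneg (by linarith) (by linarith [h5.2, h6.1])
        have P4 : 0 ≤ (ε + e) * (2 * (a + b) + (d s - d t)) :=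
          mul_nonneg (by linarith) (by linarith [h5.1, h6.2])
        linarith [P1, P4, hεE, hgl, hEg]
  have hx := hmem ε (by linarith) le_rfl
  have hy := hmem (-ε) le_rfl (by linarith)
  obtain ⟨-, hext2⟩ := (mem_extremePoints).mp hext
  have hseg : z ∈ openSegment ℝ (fun t => z t + ε * d t) (fun t => z t + (-ε) * d t) := by
    refine ⟨1/2, 1/2, by norm_num, by norm_num, by norm_num, ?_⟩
    funext t
    simp only [Pi.add_apply, Pi.smul_apply, smul_eq_mul]
    ring
  have hxx := (hext2 _ hx _ hy hseg).1
  have hcon := congrFun hxx i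
  simp only [hdi] at hcon
  have : 0 < ε * a := mul_pos hε ha
  linarith

theorem rev {n : ℕ} (p : Fin n → ℝ) (hp : ∀ i, 0 < p i) (m M c : ℝ) (hmM : m < M)
    (P : Set (Fin n → ℝ))
    (hP : P = {z : Fin n → ℝ | (∑ i, p i * z i = c) ∧ (∀ i, m ≤ z i ∧ z i ≤ M) ∧
      (∀ i j : Fin n, i ≤ j → z j ≤ z i)})
    (z : Fin n → ℝ) (hz : z ∈ P)
    (k l : ℕ) (α : ℝ) (hkl : k ≤ l) (hln : l ≤ n)
    (hMz : ∀ i : Fin n, i.val < k → z i = M)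
    (hmid : ∀ i : Fin n, k ≤ i.val → i.val < l → z i = α)
    (hmz : ∀ i : Fin n, l ≤ i.val → z i = m) :
    z ∈ Set.extremePoints ℝ P := by
  subst hP
  obtain ⟨hzc, hzb, hzm⟩ := hz
  rw [mem_extremePoints]
  refine ⟨⟨hzc, hzb, hzm⟩, ?_⟩
  rintro x ⟨hxc, hxb, hxm⟩ y ⟨hyc, hyb, hym⟩ ⟨a, b, ha, hb, hab, hxy⟩
  have hpt : ∀ t, a * x t + b * y t = z t := by
    intro t
    have := congrFun hxy t
    simpa using this
  -- coords where z = M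
  have hMeq : ∀ t : Fin n, z t = M → x t = M ∧ y t = M := by
    intro t ht
    have h1 := (hxb t).2
    have h2 := (hyb t).2
    have h3 := hpt t
    have h4 : a * (M - x t) + b * (M - y t) = 0 := by linear_combination M * hab - h3 - ht
    have h5 : x t = M := by
      by_contra hc
      have hlt : x t < M := lt_of_le_of_ne h1 hc
      have : 0 < a * (M - x t) := mul_pos ha (by linarith)
      have : 0 ≤ b * (M - y t) := mul_nonneg hb.le (by linarith)
      linarith
    refine ⟨h5, ?_⟩
    by_contra hc
    have hlt : y t < M := lt_of_le_of_ne h2 hc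
    have : 0 < b * (M - y t) := mul_pos hb (by linarith)
    have : 0 ≤ a * (M - x t) := mul_nonneg ha.le (by linarith)
    linarith
  have hmeq : ∀ t : Fin n, z t = m → x t = m ∧ y t = m := by
    intro t ht
    have h1 := (hxb t).1
    have h2 := (hyb t).1
    have h3 := hpt t
    have h4 : a * (x t - m) + b * (y t - m) = 0 := by linear_combination h3 + ht - m * hab
    have h5 : x t = m := by
      by_contra hc
      have hlt : m < x t := lt_of_le_of_ne h1 (Ne.symm hc)
      have : 0 < a * (x t - m) := mul_pos ha (by linarith)
      have : 0 ≤ b * (y t - m) := mul_nonneg hb.le (by linarith)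
      linarith
    refine ⟨h5, ?_⟩
    by_contra hc
    have hlt : m < y t := lt_of_le_of_ne h2 (Ne.symm hc)
    have : 0 < b * (y t - m) := mul_pos hb (by linarith)
    have : 0 ≤ a * (x t - m) := mul_nonneg ha.le (by linarith)
    linarith
  -- it suffices to show x = z
  have hxz : x = z := by
    by_cases hkl' : k < l
    · -- middle nonempty
      have hk : k < n := lt_of_lt_of_le hkl' hln
      set i0 : Fin n := ⟨k, hk⟩ with hi0
      -- x is constant on the middle block
      have hconst : ∀ t : Fin n, k ≤ t.val → t.val < l → x t = x i0 := by
        intro t h1 h2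
        have hle : i0 ≤ t := by
          rw [Fin.le_def]
          exact h1
        have hx1 : x t ≤ x i0 := hxm i0 t hle
        have hy1 : y t ≤ y i0 := hym i0 t hle
        have hz1 : z t = α := hmid t h1 h2
        have hz2 : z i0 = α := hmid i0 le_rfl hkl'
        have h3 := hpt t
        have h4 := hpt i0
        have h5 : a * (x i0 - x t) + b * (y i0 - y t) = 0 := by
          linear_combination h4 - h3 - hz1 + hz2
        by_contra hc
        have hlt : x t < x i0 := lt_of_le_of_ne hx1 hc
        have : 0 < a * (x i0 - x t) := mul_pos ha (by linarith)
        have : 0 ≤ b * (y i0 - y t) := mul_nonneg hb.le (by linarith)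
        linarith
      -- value of middle block of x
      set β := x i0 with hβ
      have hxM' : ∀ i : Fin n, i.val < k → x i = M := fun i hi => (hMeq i (hMz i hi)).1
      have hxm' : ∀ i : Fin n, l ≤ i.val → x i = m := fun i hi => (hmeq i (hmz i hi)).1
      have hsx := sum_split p x k l M β m hkl hxM' hconst hxm'
      have hsz := sum_split p z k l M α m hkl hMz hmid hmz
      have hS2 : 0 < ∑ i ∈ Finset.univ.filter (fun i : Fin n => k ≤ i.val ∧ i.val < l), p i := by
        apply Finset.sum_pos (fun t _ => hp t)
        exact ⟨i0, by simp [hi0, hkl']⟩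
      have hβα : β = α := by
        rw [hxc] at hsx
        rw [hzc] at hsz
        have h : β * ∑ i ∈ Finset.univ.filter (fun i : Fin n => k ≤ i.val ∧ i.val < l), p i
            = α * ∑ i ∈ Finset.univ.filter (fun i : Fin n => k ≤ i.val ∧ i.val < l), p i := by
          linarith
        exact mul_right_cancel₀ hS2.ne' h
      funext t
      rcases lt_or_ge t.val k with h | h
      · rw [hxM' t h, hMz t h]
      · rcases lt_or_ge t.val l with h2 | h2
        · rw [hconst t h h2, hmid t h h2]; exact hβα
        · rw [hxm' t h2, hmz t h2]
    · have hkeq : k = l := le_antisymm hkl (not_lt.mp hkl')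
      funext t
      rcases lt_or_ge t.val k with h | h
      · rw [(hMeq t (hMz t h)).1, hMz t h]
      · rw [(hmeq t (hmz t (hkeq ▸ h))).1, hmz t (hkeq ▸ h)]
  have hyz : y = z := by
    funext t
    have h3 := hpt t
    rw [hxz] at h3
    have : b * y t = b * z t := by linear_combination h3 - z t * hab
    exact mul_left_cancel₀ hb.ne' this
  exact ⟨hxz, hyz⟩



theorem stmt1 {n : ℕ} (p : Fin n → ℝ) (hp : ∀ i, 0 < p i) (m M c : ℝ) (hmM : m < M)
    (P : Set (Fin n → ℝ))
    (hP : P = {z : Fin n → ℝ | (∑ i, p i * z i = c) ∧ (∀ i, m ≤ z i ∧ z i ≤ M) ∧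
      (∀ i j : Fin n, i ≤ j → z j ≤ z i)})
    (z : Fin n → ℝ) (hz : z ∈ P) :
    z ∈ Set.extremePoints ℝ P ↔
      ∃ k l : ℕ, ∃ α : ℝ, k ≤ l ∧ l ≤ n ∧ m ≤ α ∧ α ≤ M ∧
        (∀ i : Fin n, i.val < k → z i = M) ∧
        (∀ i : Fin n, k ≤ i.val → i.val < l → z i = α) ∧
        (∀ i : Fin n, l ≤ i.val → z i = m) ∧
        (k < l → α = (c - M * ∑ i ∈ Finset.univ.filter (fun i : Fin n => i.val < k), p i
            - m * ∑ i ∈ Finset.univ.filter (fun i : Fin n => l ≤ i.val), p i)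
          / ∑ i ∈ Finset.univ.filter (fun i : Fin n => k ≤ i.val ∧ i.val < l), p i) ∧
        (k + 1 < l → m < α ∧ α < M) := by
  constructor
  · intro hext
    rw [hP] at hz hext
    obtain ⟨hzc, hzb, hzm⟩ := hz
    have hint : ∀ i j : Fin n, m < z i → z i < M → m < z j → z j < M → z i = z j := by
      intro i j h1 h2 h3 h4
      by_contra hc
      rcases lt_or_gt_of_ne hc with h | h
      · exact (not_extreme p hp m M c z hzc hzb hzm hext j i h1 h4 h).elim
      · exact (not_extreme p hp m M c z hzc hzb hzm hext i j h3 h2 h).elim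
    classical
    set S1 := Finset.univ.filter (fun t : Fin n => z t = M) with hS1
    set S2 := Finset.univ.filter (fun t : Fin n => m < z t) with hS2
    have hdc1 : ∀ i j : Fin n, i ≤ j → j ∈ S1 → i ∈ S1 := by
      intro i j hij hj
      simp only [hS1, Finset.mem_filter, Finset.mem_univ, true_and] at hj ⊢
      have h1 := hzm i j hij
      have h2 := (hzb i).2
      rw [hj] at h1
      linarith
    have hdc2 : ∀ i j : Fin n, i ≤ j → j ∈ S2 → i ∈ S2 := by
      intro i j hij hj
      simp only [hS2, Finset.mem_filter, Finset.mem_univ, true_and] at hj ⊢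
      have h1 := hzm i j hij
      linarith
    have hmem1 := mem_iff_lt_card S1 hdc1
    have hmem2 := mem_iff_lt_card S2 hdc2
    set k := S1.card with hk'
    set l := S2.card with hl'
    have hsub : S1 ⊆ S2 := by
      intro t ht
      simp only [hS1, Finset.mem_filter, Finset.mem_univ, true_and] at ht
      simp only [hS2, Finset.mem_filter, Finset.mem_univ, true_and]
      rw [ht]; exact hmM
    have hkl : k ≤ l := Finset.card_le_card hsub
    have hln : l ≤ n := le_trans (Finset.card_le_univ S2) (by simp)
    have hMz : ∀ i : Fin n, i.val < k → z i = M := by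
      intro i hi
      have := (hmem1 i).mpr hi
      simpa [hS1] using this
    have hmz : ∀ i : Fin n, l ≤ i.val → z i = m := by
      intro i hi
      have h1 : i ∉ S2 := fun h => by have := (hmem2 i).mp h; omega
      simp only [hS2, Finset.mem_filter, Finset.mem_univ, true_and, not_lt] at h1
      exact le_antisymm h1 (hzb i).1
    have himid : ∀ i : Fin n, k ≤ i.val → i.val < l → m < z i ∧ z i < M := by
      intro i h1 h2
      have hiS2 : i ∈ S2 := (hmem2 i).mpr h2
      have hiS1 : i ∉ S1 := fun h => by have := (hmem1 i).mp h; omega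
      simp only [hS2, Finset.mem_filter, Finset.mem_univ, true_and] at hiS2
      simp only [hS1, Finset.mem_filter, Finset.mem_univ, true_and] at hiS1
      exact ⟨hiS2, lt_of_le_of_ne (hzb i).2 hiS1⟩
    by_cases hkl' : k < l
    · have hkn : k < n := lt_of_lt_of_le hkl' hln
      set i0 : Fin n := ⟨k, hkn⟩ with hi0
      have hi0b := himid i0 le_rfl hkl'
      set α := z i0 with hα
      have hmid : ∀ i : Fin n, k ≤ i.val → i.val < l → z i = α := by
        intro i h1 h2
        have hi := himid i h1 h2
        exact hint i i0 hi.1 hi.2 hi0b.1 hi0b.2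
      refine ⟨k, l, α, hkl, hln, hi0b.1.le, hi0b.2.le, hMz, hmid, hmz, ?_, fun _ => hi0b⟩
      intro _
      have hsz := sum_split p z k l M α m hkl hMz hmid hmz
      have hS2pos : 0 < ∑ i ∈ Finset.univ.filter (fun i : Fin n => k ≤ i.val ∧ i.val < l), p i := by
        refine Finset.sum_pos (fun t _ => hp t) ⟨i0, ?_⟩
        simp only [Finset.mem_filter, Finset.mem_univ, true_and, hi0]
        exact ⟨le_rfl, hkl'⟩
      rw [eq_div_iff hS2pos.ne']
      rw [hzc] at hsz
      linarith
    · have hkeq : k = l := le_antisymm hkl (not_lt.mp hkl')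
      exact ⟨k, l, m, hkl, hln, le_rfl, hmM.le, hMz,
        fun i h1 h2 => absurd (lt_of_le_of_lt h1 h2) hkl', hmz,
        fun h => absurd h hkl', fun h => absurd (by omega : k < l) hkl'⟩
  · rintro ⟨k, l, α, hkl, hln, -, -, hMz, hmid, hmz, -, -⟩
    exact rev p hp m M c hmM P hP z hz k l α hkl hln hMz hmid hmz
end

section
/- Let p₁,...,pₙ > 0, m < M, c ∈ ℝ, P = {z ∈ ℝⁿ : Σ pᵢzᵢ = c, m ≤ zᵢ ≤ M, z₁ ≥ ... ≥ zₙ} nonempty. Suppose v ∈ P is an extreme point. Then among the coordinates of v strictly between m and M, all are equal; i.e., there exists α such that for every index i with m < vᵢ < M, vᵢ = α. -/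
/-!
If an extreme point `v` had two distinct values `a ≠ b` strictly between `m` and `M`, raise the
coordinates of the level set `{v = a}` by `η s` and lower those of `{v = b}` by `η t`, where
`s`, `t` are the `p`-weights of `{v = b}` and `{v = a}`. This keeps `∑ pᵢ zᵢ` fixed, and since the
perturbation is constant on level sets of `v` and only touches interior values, all strict
inequalities among the finitely many constraints survive for small `|η|`. So `v ± η d` both lie
in `P`, contradicting extremality.
-/

open Filter Topology

theorem eq_zero_of_add_mem_of_sub_mem_of_mem_extremePoints {E : Type*} [AddCommGroup E]
    [Module ℝ E] {A : Set E} {x y : E} (hx : x ∈ A.extremePoints ℝ) (h₁ : x + y ∈ A)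
    (h₂ : x - y ∈ A) : y = 0 :=
  add_eq_left.1 (hx.2 h₁ h₂ (mem_openSegment_add_sub x y))

theorem eq_zero_of_eventually_add_smul_mem_of_mem_extremePoints {E : Type*} [AddCommGroup E]
    [Module ℝ E] {A : Set E} {x d : E} (hx : x ∈ A.extremePoints ℝ)
    (h : ∀ᶠ η in 𝓝 (0 : ℝ), x + η • d ∈ A) : d = 0 := by
  have h_neg : ∀ᶠ η in 𝓝 (0 : ℝ), x - η • d ∈ A := by
    simpa [neg_smul, ← sub_eq_add_neg] using
      (continuous_neg.tendsto' (0 : ℝ) 0 neg_zero).eventually h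
  obtain ⟨η, ⟨hη₁, hη₂⟩, hη⟩ :=
    ((h.and h_neg).filter_mono nhdsWithin_le_nhds |>.and
      (self_mem_nhdsWithin : {η : ℝ | η ≠ 0} ∈ 𝓝[≠] 0)).exists
  exact (smul_eq_zero.1
    (eq_zero_of_add_mem_of_sub_mem_of_mem_extremePoints hx hη₁ hη₂)).resolve_left hη

theorem eventually_add_mul_lt_add_mul {a b : ℝ} (h : a < b) (u w : ℝ) :
    ∀ᶠ η in 𝓝 (0 : ℝ), a + η * u < b + η * w :=
  ContinuousAt.eventually_lt (by fun_prop) (by fun_prop) (by simpa using h)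

section AntitoneSlab

variable {ι : Type*} [Fintype ι] [LE ι]

def antitoneSlab (p : ι → ℝ) (m M c : ℝ) : Set (ι → ℝ) :=
  {z | (∑ i, p i * z i = c) ∧ (∀ i, m ≤ z i ∧ z i ≤ M) ∧ (∀ i j : ι, i ≤ j → z j ≤ z i)}

theorem eventually_add_smul_comp_mem_antitoneSlab {p v : ι → ℝ} {m M c : ℝ}
    (hv : v ∈ antitoneSlab p m M c) (φ : ℝ → ℝ) (hφ_sum : ∑ i, p i * φ (v i) = 0)
    (hφ_supp : ∀ i, φ (v i) ≠ 0 → m < v i ∧ v i < M) :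
    ∀ᶠ η in 𝓝 (0 : ℝ), v + η • (φ ∘ v) ∈ antitoneSlab p m M c := by
  obtain ⟨hv_sum, hv_bounds, hv_anti⟩ := hv
  have h_sum (η : ℝ) : ∑ i, p i * (v + η • (φ ∘ v)) i = c := by
    simp only [Pi.add_apply, Pi.smul_apply, Function.comp_apply, smul_eq_mul, mul_add,
      Finset.sum_add_distrib, hv_sum, mul_left_comm (p _) η, ← Finset.mul_sum, hφ_sum, mul_zero,
      add_zero]
  have h_bounds :
      ∀ᶠ η in 𝓝 (0 : ℝ), ∀ i, m ≤ (v + η • (φ ∘ v)) i ∧ (v + η • (φ ∘ v)) i ≤ M := by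
    refine eventually_all.2 fun i => ?_
    by_cases hi : φ (v i) = 0
    · simpa [hi] using hv_bounds i
    · obtain ⟨hm, hM⟩ := hφ_supp i hi
      filter_upwards [eventually_add_mul_lt_add_mul hm 0 (φ (v i)),
        eventually_add_mul_lt_add_mul hM (φ (v i)) 0] with η h₁ h₂
      simp only [mul_zero, add_zero] at h₁ h₂
      exact ⟨h₁.le, h₂.le⟩
  have h_anti : ∀ᶠ η in 𝓝 (0 : ℝ),
      ∀ i j : ι, i ≤ j → (v + η • (φ ∘ v)) j ≤ (v + η • (φ ∘ v)) i := by
    refine eventually_all.2 fun i => eventually_all.2 fun j => ?_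
    by_cases hij : i ≤ j
    · rcases (hv_anti i j hij).eq_or_lt with heq | hlt
      · exact .of_forall fun η _ => by simp [heq]
      · filter_upwards [eventually_add_mul_lt_add_mul hlt (φ (v j)) (φ (v i))] with η h _
        exact h.le
    · exact .of_forall fun η h => absurd h hij
  filter_upwards [h_bounds, h_anti] with η h₁ h₂ using ⟨h_sum η, h₁, h₂⟩

theorem eq_of_mem_extremePoints_antitoneSlab {p v : ι → ℝ} {m M c : ℝ} (hp : ∀ i, 0 < p i)
    (hv : v ∈ (antitoneSlab p m M c).extremePoints ℝ) {i j : ι} (hi : m < v i ∧ v i < M)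
    (hj : m < v j ∧ v j < M) : v i = v j := by
  by_contra hij
  set s := ∑ k, if v k = v j then p k else 0
  set t := ∑ k, if v k = v i then p k else 0
  set φ : ℝ → ℝ := fun x => (if x = v i then s else 0) - (if x = v j then t else 0)
  have ht : 0 < t := Finset.sum_pos' (fun k _ => by split_ifs <;> simp [(hp k).le])
    ⟨i, Finset.mem_univ _, by simp [hp i]⟩
  have hφ_sum : ∑ k, p k * φ (v k) = 0 := by
    simp only [φ, mul_sub, mul_ite, mul_zero, Finset.sum_sub_distrib]
    rw [← Finset.sum_filter, ← Finset.sum_filter, ← Finset.sum_mul, ← Finset.sum_mul,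
      Finset.sum_filter, Finset.sum_filter, mul_comm, sub_self]
  have hφ_supp (k : ι) (hk : φ (v k) ≠ 0) : m < v k ∧ v k < M := by
    by_cases hki : v k = v i
    · rwa [hki]
    by_cases hkj : v k = v j
    · rwa [hkj]
    simp [φ, hki, hkj] at hk
  have hφ := eq_zero_of_eventually_add_smul_mem_of_mem_extremePoints hv
    (eventually_add_smul_comp_mem_antitoneSlab hv.1 φ hφ_sum hφ_supp)
  have hφj : φ (v j) = -t := by simp [φ, Ne.symm hij]
  have hφj_zero := congrFun hφ j
  simp only [Function.comp_apply, Pi.zero_apply, hφj] at hφj_zero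
  linarith

end AntitoneSlab

theorem stmt2_general {n : ℕ} (p : Fin n → ℝ) (hp : ∀ i, 0 < p i) (m M c : ℝ)
    (P : Set (Fin n → ℝ))
    (hP : P = {z : Fin n → ℝ | (∑ i, p i * z i = c) ∧ (∀ i, m ≤ z i ∧ z i ≤ M) ∧
      (∀ i j : Fin n, i ≤ j → z j ≤ z i)})
    (v : Fin n → ℝ) (hv : v ∈ Set.extremePoints ℝ P) :
    ∃ α : ℝ, ∀ i : Fin n, m < v i → v i < M → v i = α := by
  change P = antitoneSlab p m M c at hP
  subst hP
  by_cases h : ∃ i, m < v i ∧ v i < M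
  · obtain ⟨i₀, hi₀⟩ := h
    exact ⟨v i₀, fun i hm hM => eq_of_mem_extremePoints_antitoneSlab hp hv ⟨hm, hM⟩ hi₀⟩
  · push Not at h
    exact ⟨0, fun i hm hM => absurd hM (h i hm).not_gt⟩

theorem stmt2 {n : ℕ} (p : Fin n → ℝ) (hp : ∀ i, 0 < p i) (m M c : ℝ) (hmM : m < M)
    (P : Set (Fin n → ℝ))
    (hP : P = {z : Fin n → ℝ | (∑ i, p i * z i = c) ∧ (∀ i, m ≤ z i ∧ z i ≤ M) ∧
      (∀ i j : Fin n, i ≤ j → z j ≤ z i)})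
    (hne : P.Nonempty)
    (v : Fin n → ℝ) (hv : v ∈ Set.extremePoints ℝ P) :
    ∃ α : ℝ, ∀ i : Fin n, m < v i → v i < M → v i = α :=
  stmt2_general p hp m M c P hP v hv
end

section
/- Let p₁,...,pₙ > 0 with Σ pᵢ = 1 and m < M. For z ∈ ℝⁿ with m ≤ zᵢ ≤ M for all i and Σ pᵢ zᵢ = c, the weighted variance Σ pᵢ zᵢ² − c² is at most (M − c)(c − m), with equality if and only if each zᵢ ∈ {m, M}. -/
theorem stmt16 {n : ℕ} (p : Fin n → ℝ) (hp : ∀ i, 0 < p i) (hpsum : ∑ i, p i = 1)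
    (m M c : ℝ) (hmM : m < M)
    (z : Fin n → ℝ) (hzm : ∀ i, m ≤ z i) (hzM : ∀ i, z i ≤ M)
    (hmean : ∑ i, p i * z i = c) :
    (∑ i, p i * z i ^ 2) - c ^ 2 ≤ (M - c) * (c - m) ∧
    ((∑ i, p i * z i ^ 2) - c ^ 2 = (M - c) * (c - m) ↔ ∀ i, z i = m ∨ z i = M) := by
  have hf : ∀ i, 0 ≤ p i * ((M - z i) * (z i - m)) := fun i =>
    mul_nonneg (hp i).le (mul_nonneg (sub_nonneg.2 (hzM i)) (sub_nonneg.2 (hzm i)))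
  have hsum : ∑ i, p i * ((M - z i) * (z i - m)) =
      (M - c) * (c - m) - ((∑ i, p i * z i ^ 2) - c ^ 2) := by
    have key : ∑ i, p i * ((M - z i) * (z i - m)) =
        (M + m) * (∑ i, p i * z i) - M * m * (∑ i, p i) - ∑ i, p i * z i ^ 2 := by
      rw [Finset.mul_sum, Finset.mul_sum, ← Finset.sum_sub_distrib, ← Finset.sum_sub_distrib]
      exact Finset.sum_congr rfl fun i _ => by ring
    rw [key, hmean, hpsum]; ring
  have hnn : 0 ≤ ∑ i, p i * ((M - z i) * (z i - m)) := Finset.sum_nonneg fun i _ => hf i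
  constructor
  · linarith [hsum ▸ hnn]
  constructor
  · intro heq
    have h0 : ∑ i, p i * ((M - z i) * (z i - m)) = 0 := by rw [hsum, heq]; ring
    intro i
    have hi := (Finset.sum_eq_zero_iff_of_nonneg (fun j _ => hf j)).1 h0 i (Finset.mem_univ i)
    have h2 : (M - z i) * (z i - m) = 0 := by
      rcases mul_eq_zero.1 hi with h | h
      · exact absurd h (hp i).ne'
      · exact h
    rcases mul_eq_zero.1 h2 with h | h
    · right; linarith
    · left; linarith
  · intro h
    have h0 : ∑ i, p i * ((M - z i) * (z i - m)) = 0 :=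
      Finset.sum_eq_zero fun i _ => by rcases h i with h' | h' <;> simp [h']
    rw [hsum] at h0; linarith
end

section
/- Let k+1 < l and define α(k, l) = (c − M·C(k) − m·(C(n) − C(l)))/(C(l) − C(k)) where C(i) = Σ_{j≤i} p_j with all p_j > 0. If m < α(k, l) < M and α(k+1, l) ≥ m, then α(k+1, l) ≤ α(k, l) < M, so the three-block vector with parameters (k+1, l) is feasible in P (all ordering and bound constraints hold). -/
/-!
Clearing denominators, `α k l` is the `p`-weighted mean of `M` (weight `p k`) and `α (k + 1) l`
(weight `C(l) - C(k + 1) > 0`). Hence `α k l < M` forces `α (k + 1) l < α k l`, so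
`m ≤ α (k + 1) l ≤ M` and the three-block vector is bounded and non-increasing; its weighted sum
is `c` because that is exactly the equation defining `α (k + 1) l`.
-/

open Finset

section ThreeBlock

variable {n : ℕ}

def threeBlock (k l : ℕ) (M a m : ℝ) : Fin n → ℝ :=
  fun i => if i.val < k then M else if i.val < l then a else m

variable {k l : ℕ} {M a m : ℝ}

theorem threeBlock_mem_Icc (hma : m ≤ a) (haM : a ≤ M) (i : Fin n) :
    threeBlock k l M a m i ∈ Set.Icc m M := by
  unfold threeBlock
  split_ifs <;> constructor <;> linarith

theorem threeBlock_antitone (hma : m ≤ a) (haM : a ≤ M) :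
    Antitone (threeBlock (n := n) k l M a m) := by
  intro i j hij
  have hij : i.val ≤ j.val := hij
  unfold threeBlock
  split_ifs <;> first | omega | linarith

theorem sum_mul_threeBlock (p : Fin n → ℝ) (hkl : k ≤ l) :
    ∑ i, p i * threeBlock k l M a m i =
      M * ∑ i ∈ univ.filter (fun i : Fin n => i.val < k), p i
        + a * ∑ i ∈ univ.filter (fun i : Fin n => k ≤ i.val ∧ i.val < l), p i
        + m * ∑ i ∈ univ.filter (fun i : Fin n => l ≤ i.val), p i := by
  simp only [sum_filter, mul_sum, ← sum_add_distrib]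
  refine sum_congr rfl fun i _ => ?_
  unfold threeBlock
  split_ifs <;> first | omega | ring

end ThreeBlock

theorem sum_filter_eq_add_sum_filter {ι β : Type*} [Fintype ι] [DecidableEq ι] [AddCommMonoid β]
    {P Q : ι → Prop} [DecidablePred P] [DecidablePred Q] (f : ι → β) (j : ι)
    (hQ : ∀ i, Q i ↔ i = j ∨ P i) (hj : ¬ P j) :
    ∑ i ∈ univ.filter Q, f i = f j + ∑ i ∈ univ.filter P, f i := by
  rw [show univ.filter Q = insert j (univ.filter P) by ext i; simp [hQ],
    sum_insert (by simp [hj])]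

theorem lt_of_weighted_mean_lt {a a' M q s : ℝ} (hq : 0 < q) (hs : 0 < s)
    (hmean : a * (q + s) = M * q + a' * s) (haM : a < M) : a' < a := by
  nlinarith

theorem stmt17_general {n : ℕ} (p : Fin n → ℝ) (hp : ∀ i, 0 < p i) (m M c : ℝ)
    (P : Set (Fin n → ℝ))
    (hP : P = {z : Fin n → ℝ | (∑ i, p i * z i = c) ∧ (∀ i, m ≤ z i ∧ z i ≤ M) ∧
      (∀ i j : Fin n, i ≤ j → z j ≤ z i)})
    (k l : ℕ) (hkl : k + 1 < l) (hln : l ≤ n)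
    (α : ℕ → ℕ → ℝ)
    (hα : ∀ k' l' : ℕ, α k' l' =
      (c - M * ∑ i ∈ Finset.univ.filter (fun i : Fin n => i.val < k'), p i
        - m * ∑ i ∈ Finset.univ.filter (fun i : Fin n => l' ≤ i.val), p i)
      / ∑ i ∈ Finset.univ.filter (fun i : Fin n => k' ≤ i.val ∧ i.val < l'), p i)
    (h2 : α k l < M) (h3 : m ≤ α (k + 1) l) :
    α (k + 1) l ≤ α k l ∧ α k l < M ∧
      (fun i : Fin n => if i.val < k + 1 then M else if i.val < l then α (k + 1) l else m) ∈ P := by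
  have hk : k < n := by omega
  set S := ∑ i ∈ univ.filter (fun i : Fin n => k + 1 ≤ i.val ∧ i.val < l), p i
  have hS : 0 < S := sum_pos (fun i _ => hp i) ⟨⟨k + 1, by omega⟩, by simp; omega⟩
  have hbelow := sum_filter_eq_add_sum_filter (P := fun i : Fin n => i.val < k)
    (Q := fun i : Fin n => i.val < k + 1) p ⟨k, hk⟩ (fun i => by simp [Fin.ext_iff]; omega) (by simp)
  have hmiddle := sum_filter_eq_add_sum_filter (P := fun i : Fin n => k + 1 ≤ i.val ∧ i.val < l)
    (Q := fun i : Fin n => k ≤ i.val ∧ i.val < l) p ⟨k, hk⟩ (fun i => by simp [Fin.ext_iff]; omega)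
    (by simp)
  have hαk := hα k l
  have hαk1 := hα (k + 1) l
  rw [hmiddle, eq_div_iff (add_pos (hp _) hS).ne'] at hαk
  rw [hbelow, eq_div_iff hS.ne'] at hαk1
  have hle : α (k + 1) l ≤ α k l :=
    (lt_of_weighted_mean_lt (hp _) hS (by linear_combination hαk - hαk1) h2).le
  have haM : α (k + 1) l ≤ M := hle.trans h2.le
  refine ⟨hle, h2, ?_⟩
  rw [hP]
  change threeBlock (k + 1) l M (α (k + 1) l) m ∈ _
  refine ⟨?_, threeBlock_mem_Icc h3 haM, fun i j hij => threeBlock_antitone h3 haM hij⟩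
  rw [sum_mul_threeBlock p hkl.le, hbelow]
  linear_combination hαk1

theorem stmt17 {n : ℕ} (p : Fin n → ℝ) (hp : ∀ i, 0 < p i) (m M c : ℝ) (hmM : m < M)
    (P : Set (Fin n → ℝ))
    (hP : P = {z : Fin n → ℝ | (∑ i, p i * z i = c) ∧ (∀ i, m ≤ z i ∧ z i ≤ M) ∧
      (∀ i j : Fin n, i ≤ j → z j ≤ z i)})
    (k l : ℕ) (hkl : k + 1 < l) (hln : l ≤ n)
    (α : ℕ → ℕ → ℝ)
    (hα : ∀ k' l' : ℕ, α k' l' =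
      (c - M * ∑ i ∈ Finset.univ.filter (fun i : Fin n => i.val < k'), p i
        - m * ∑ i ∈ Finset.univ.filter (fun i : Fin n => l' ≤ i.val), p i)
      / ∑ i ∈ Finset.univ.filter (fun i : Fin n => k' ≤ i.val ∧ i.val < l'), p i)
    (h1 : m < α k l) (h2 : α k l < M) (h3 : m ≤ α (k + 1) l) :
    α (k + 1) l ≤ α k l ∧ α k l < M ∧
      (fun i : Fin n => if i.val < k + 1 then M else if i.val < l then α (k + 1) l else m) ∈ P :=
  stmt17_general p hp m M c P hP k l hkl hln α hα h2 h3
end
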